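/- For the swap-based process with initial correlated environment state η_{E₁E₂}, storing the system output at time s (instead of discarding it) and the output at time t yields the joint state ρ_{st} = η_{E₁E₂}; in particular, if η_{E₁E₂} is not a product state then ρ_{st} is correlated even though the inputs at r and s₊ were uncorrelated. -/
import Mathlib


open Matrix Kronecker ComplexOrder

/-- Index type: system × ancilla (storage) × environment part 1 × environment part 2. -/
abbrev Idx (d : ℕ) := Fin d × Fin d × Fin d × Fin d

/-- Swap of the system with environment part 1. -/
def W1 (d : ℕ) : Matrix (Idx d) (Idx d) ℂ :=
  fun p q => if p.1 = q.2.2.1 ∧ p.2.2.1 = q.1 ∧ p.2.1 = q.2.1 ∧ p.2.2.2 = q.2.2.2 then 1 else 0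

/-- Swap of the system with the ancilla (store the system, insert the fresh state). -/
def W2 (d : ℕ) : Matrix (Idx d) (Idx d) ℂ :=
  fun p q => if p.1 = q.2.1 ∧ p.2.1 = q.1 ∧ p.2.2.1 = q.2.2.1 ∧ p.2.2.2 = q.2.2.2 then 1 else 0

/-- Swap of the system with environment part 2. -/
def W3 (d : ℕ) : Matrix (Idx d) (Idx d) ℂ :=
  fun p q => if p.1 = q.2.2.2 ∧ p.2.2.2 = q.1 ∧ p.2.1 = q.2.1 ∧ p.2.2.1 = q.2.2.1 then 1 else 0

/-- Joint state of the two stored registers (ancilla = output at `s`, system = output at `t`),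
obtained by tracing out both environment parts. -/
noncomputable def storedState {d : ℕ} (M : Matrix (Idx d) (Idx d) ℂ) :
    Matrix (Fin d × Fin d) (Fin d × Fin d) ℂ :=
  fun p q => ∑ e1 : Fin d, ∑ e2 : Fin d,
    M (p.2, (p.1, (e1, e2))) (q.2, (q.1, (e1, e2)))

lemma W1_eq (d : ℕ) (p q : Idx d) :
    W1 d p q = if q = (p.2.2.1, (p.2.1, (p.1, p.2.2.2))) then 1 else 0 := by
  obtain ⟨a,b,c,e⟩ := p; obtain ⟨a',b',c',e'⟩ := q
  simp [W1, Prod.ext_iff, and_comm, and_assoc, eq_comm]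
  aesop

lemma W2_eq (d : ℕ) (p q : Idx d) :
    W2 d p q = if q = (p.2.1, (p.1, (p.2.2.1, p.2.2.2))) then 1 else 0 := by
  obtain ⟨a,b,c,e⟩ := p; obtain ⟨a',b',c',e'⟩ := q
  simp [W2, Prod.ext_iff, and_comm, and_assoc, eq_comm]
  aesop

lemma W3_eq (d : ℕ) (p q : Idx d) :
    W3 d p q = if q = (p.2.2.2, (p.2.1, (p.2.2.1, p.1))) then 1 else 0 := by
  obtain ⟨a,b,c,e⟩ := p; obtain ⟨a',b',c',e'⟩ := q
  simp [W3, Prod.ext_iff, and_comm, and_assoc, eq_comm]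
  aesop

lemma Wprod (d : ℕ) (p q : Idx d) :
    (W3 d * W2 d * W1 d) p q = if q = (p.2.2.1, (p.2.2.2, (p.2.1, p.1))) then 1 else 0 := by
  simp only [Matrix.mul_apply, W1_eq, W2_eq, W3_eq, ite_mul, zero_mul, one_mul,
    Finset.sum_ite_eq', Finset.mem_univ, if_true]

lemma Wprod' (d : ℕ) : W3 d * W2 d * W1 d =
    Matrix.of (fun p q : Idx d => if q = (p.2.2.1, (p.2.2.2, (p.2.1, p.1))) then (1:ℂ) else 0) := by
  ext p q; rw [Wprod]; rfl

lemma conj_entry (d : ℕ) (A : Matrix (Idx d) (Idx d) ℂ) (p q : Idx d) :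
    ((W3 d * W2 d * W1 d) * A * (W3 d * W2 d * W1 d)ᴴ) p q =
      A (p.2.2.1, (p.2.2.2, (p.2.1, p.1))) (q.2.2.1, (q.2.2.2, (q.2.1, q.1))) := by
  rw [Wprod']
  simp only [Matrix.mul_apply, Matrix.conjTranspose_apply, Wprod, ite_mul, zero_mul, one_mul,
    mul_ite, mul_zero, mul_one, apply_ite (star : ℂ → ℂ), star_one, star_zero, Matrix.of_apply,
    Finset.sum_ite_eq', Finset.mem_univ, if_true]

/-- For the swap-based process with correlated environment `η`, storing the system output
at `s` and the output at `t` yields exactly `ρ_{st} = η`; in particular if `η` is not a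
product state then the stored outputs are correlated despite uncorrelated inputs. -/
theorem stored_outputs_equal_environment (d : ℕ)
    (η : Matrix (Fin d × Fin d) (Fin d × Fin d) ℂ) (hη : η.PosSemidef) (hηtr : η.trace = 1)
    (ρr ρs : Matrix (Fin d) (Fin d) ℂ)
    (hρr : ρr.PosSemidef) (hρrtr : ρr.trace = 1)
    (hρs : ρs.PosSemidef) (hρstr : ρs.trace = 1) :
    storedState ((W3 d * W2 d * W1 d) * (ρr ⊗ₖ (ρs ⊗ₖ η)) * (W3 d * W2 d * W1 d)ᴴ) = η ∧
    ((¬ ∃ α β : Matrix (Fin d) (Fin d) ℂ, η = α ⊗ₖ β) →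
      ¬ ∃ α β : Matrix (Fin d) (Fin d) ℂ,
        storedState ((W3 d * W2 d * W1 d) * (ρr ⊗ₖ (ρs ⊗ₖ η)) * (W3 d * W2 d * W1 d)ᴴ)
          = α ⊗ₖ β) := by
  have key : storedState ((W3 d * W2 d * W1 d) * (ρr ⊗ₖ (ρs ⊗ₖ η)) * (W3 d * W2 d * W1 d)ᴴ) = η := by
    ext ⟨p1,p2⟩ ⟨q1,q2⟩
    simp only [storedState, conj_entry, Matrix.kroneckerMap_apply]
    have : ∀ e1 e2 : Fin d,
        ρr e1 e1 * (ρs e2 e2 * η (p1, p2) (q1, q2)) =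
        ρr e1 e1 * ρs e2 e2 * η (p1, p2) (q1, q2) := fun _ _ => by ring
    simp only [this, ← Finset.sum_mul, ← Finset.mul_sum]
    have h1 : ∑ e1 : Fin d, ρr e1 e1 = 1 := hρrtr
    have h2 : ∑ e2 : Fin d, ρs e2 e2 = 1 := hρstr
    rw [h1, h2]; ring
  exact ⟨key, fun h ⟨α, β, hab⟩ => h ⟨α, β, key ▸ hab⟩⟩
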